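/- arXiv:0803.3670 — 8 statements merged into one kernel-verified Lean document; each statement's English description precedes it below -/
import Mathlib

section
/- For any finite simple graph G with bandwidth bw(G), the cubicity of G satisfies cub(G) ≤ bw(G) + 1. -/
/-- `G` has a representation by axis-parallel unit cubes in `k` dimensions:
distinct vertices are adjacent iff their cubes intersect, i.e. iff the
coordinates of the (lower corners of the) cubes differ by at most 1 in
every dimension. -/
def HasCubeRep {V : Type*} (G : SimpleGraph V) (k : ℕ) : Prop :=
  ∃ c : V → Fin k → ℝ, ∀ u v : V, u ≠ v → (G.Adj u v ↔ ∀ i : Fin k, |c u i - c v i| ≤ 1)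

/-- The cubicity of `G`: the least number of dimensions of a unit-cube representation. -/
noncomputable def cubicity {V : Type*} (G : SimpleGraph V) : ℕ :=
  sInf {k | HasCubeRep G k}

/-- The bandwidth of `G`: the least `b` such that some linear ordering of the
vertices has width at most `b`. -/
noncomputable def bandwidth {V : Type*} [Fintype V] (G : SimpleGraph V) : ℕ :=
  sInf {b | ∃ e : V ≃ Fin (Fintype.card V),
    ∀ u v : V, G.Adj u v → |((e u : ℕ) : ℤ) - ((e v : ℕ) : ℤ)| ≤ (b : ℤ)}

/-!
Fix an ordering of width `b = bw(G)` and identify the vertices with their positions in `ℕ`.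
The coordinate `2 p / (2 b + 1)` keeps every edge short and separates all pairs at distance
more than `b`. For each residue `r < b`, one further coordinate separates every non-adjacent pair
`p < q ≤ p + b` with `p ≡ r (mod b)`. Shifting so that these `p` are the multiples of `b`, cut the
positions into blocks `[b k, b k + b)`. Inside block `k`, a position sits at distance `1` from the
block start `b k` if it is adjacent to it and `5/4` otherwise, all on one side. The next block start
sits `1/4` further on that side if it is adjacent to `b k`; otherwise it sits at distance `3/2`,
and block `k + 1` then folds back in the opposite direction. A case check shows that every edge of
length at most `b` stays within distance `1`.
-/

lemma HasCubeRep.comap {V W : Type*} {H : SimpleGraph W} {k : ℕ} (h : HasCubeRep H k)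
    (f : V ↪ W) : HasCubeRep (H.comap f) k := by
  obtain ⟨c, hc⟩ := h
  exact ⟨c ∘ f, fun u v huv => hc (f u) (f v) (f.injective.ne huv)⟩

lemma exists_equiv_width_le_bandwidth {V : Type*} [Fintype V] (G : SimpleGraph V) :
    ∃ e : V ≃ Fin (Fintype.card V),
      ∀ u v, G.Adj u v → |((e u : ℕ) : ℤ) - ((e v : ℕ) : ℤ)| ≤ (bandwidth G : ℤ) := by
  refine Nat.sInf_mem (s := {b | ∃ e : V ≃ Fin (Fintype.card V), ∀ u v, G.Adj u v →
    |((e u : ℕ) : ℤ) - ((e v : ℕ) : ℤ)| ≤ (b : ℤ)})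
    ⟨Fintype.card V, Fintype.equivFin V, fun u v _ => ?_⟩
  have := (Fintype.equivFin V u).isLt
  have := (Fintype.equivFin V v).isLt
  rw [abs_le]
  constructor <;> omega

open Finset

namespace Cubicity

section Layer

variable (A : ℕ → ℕ → Prop) [DecidableRel A] (b : ℕ)

noncomputable def layerTurn (k : ℕ) : ℝ := if A (b * k) (b * (k + 1)) then 1 else -1

noncomputable def layerStep (k : ℕ) : ℝ := if A (b * k) (b * (k + 1)) then 1 / 4 else 3 / 2

noncomputable def layerDir (k : ℕ) : ℝ := ∏ i ∈ range k, layerTurn A b i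

noncomputable def layerBase (k : ℕ) : ℝ := ∑ i ∈ range k, layerDir A b i * layerStep A b i

noncomputable def layerOffset (k ρ : ℕ) : ℝ :=
  if ρ = 0 then 0 else if A (b * k) (b * k + ρ) then 1 else 5 / 4

noncomputable def layer (p : ℕ) : ℝ :=
  layerBase A b (p / b) + layerDir A b (p / b) * layerOffset A b (p / b) (p % b)

lemma layerOffset_nonneg (k ρ : ℕ) : 0 ≤ layerOffset A b k ρ := by
  unfold layerOffset; split_ifs <;> norm_num

lemma layerOffset_le (k ρ : ℕ) : layerOffset A b k ρ ≤ 5 / 4 := by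
  unfold layerOffset; split_ifs <;> norm_num

lemma one_le_layerOffset (k : ℕ) {ρ : ℕ} (hρ : ρ ≠ 0) : 1 ≤ layerOffset A b k ρ := by
  simp only [layerOffset, hρ, if_false]; split_ifs <;> norm_num

variable {A b}

lemma abs_layerDir (k : ℕ) : |layerDir A b k| = 1 := by
  rw [layerDir, abs_prod]
  exact prod_eq_one fun i _ => by unfold layerTurn; split_ifs <;> simp

lemma layer_mul_add (k : ℕ) {ρ : ℕ} (hρ : ρ < b) :
    layer A b (b * k + ρ) = layerBase A b k + layerDir A b k * layerOffset A b k ρ := by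
  have hb : 0 < b := by omega
  rw [layer, Nat.mul_add_div hb, Nat.div_eq_of_lt hρ, add_zero, Nat.mul_add_mod,
    Nat.mod_eq_of_lt hρ]

lemma layer_sub_layer_same_block (k : ℕ) {ρ ρ' : ℕ} (hρ : ρ < b) (hρ' : ρ' < b) :
    layer A b (b * k + ρ) - layer A b (b * k + ρ') =
      layerDir A b k * (layerOffset A b k ρ - layerOffset A b k ρ') := by
  rw [layer_mul_add k hρ, layer_mul_add k hρ']; ring

lemma layer_sub_layer_next_block (k : ℕ) {ρ ρ' : ℕ} (hρ : ρ < b) (hρ' : ρ' < b) :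
    layer A b (b * k + ρ) - layer A b (b * (k + 1) + ρ') =
      layerDir A b k * (layerOffset A b k ρ - layerStep A b k -
        layerTurn A b k * layerOffset A b (k + 1) ρ') := by
  rw [layer_mul_add k hρ, layer_mul_add (k + 1) hρ', layerBase, layerBase, sum_range_succ,
    layerDir, layerDir, prod_range_succ]
  ring

lemma abs_layer_sub_le_one_same_block (k : ℕ) {ρ ρ' : ℕ} (hρρ' : ρ < ρ') (hρ' : ρ' < b)
    (hA : A (b * k + ρ) (b * k + ρ')) : |layer A b (b * k + ρ) - layer A b (b * k + ρ')| ≤ 1 := by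
  rw [layer_sub_layer_same_block k (hρρ'.trans hρ') hρ', abs_mul, abs_layerDir, one_mul]
  have hρ'0 : ρ' ≠ 0 := by omega
  rcases eq_or_ne ρ 0 with rfl | hρ0
  · rw [add_zero] at hA
    simp [layerOffset, hρ'0, hA]
  · rw [abs_le]
    constructor <;> linarith [one_le_layerOffset A b k hρ0, one_le_layerOffset A b k hρ'0,
      layerOffset_le A b k ρ, layerOffset_le A b k ρ']

lemma abs_layer_sub_le_one_next_block (k : ℕ) {ρ ρ' : ℕ} (hρ'ρ : ρ' ≤ ρ) (hρ : ρ < b)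
    (hA : A (b * k + ρ) (b * (k + 1) + ρ')) :
    |layer A b (b * k + ρ) - layer A b (b * (k + 1) + ρ')| ≤ 1 := by
  rw [layer_sub_layer_next_block k hρ (hρ'ρ.trans_lt hρ), abs_mul, abs_layerDir, one_mul]
  rcases eq_or_ne ρ 0 with rfl | hρ0
  · obtain rfl : ρ' = 0 := by omega
    rw [add_zero, add_zero] at hA
    norm_num [layerOffset, layerStep, layerTurn, hA]
  · have := one_le_layerOffset A b k hρ0
    have := layerOffset_le A b k ρ
    have := layerOffset_nonneg A b (k + 1) ρ'
    have := layerOffset_le A b (k + 1) ρ'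
    unfold layerStep layerTurn
    split_ifs <;> rw [abs_le] <;> constructor <;> linarith

lemma abs_layer_sub_le_one {p q : ℕ} (hpq : p < q) (hqp : q ≤ p + b) (hA : A p q) :
    |layer A b p - layer A b q| ≤ 1 := by
  have hb : 0 < b := by omega
  obtain ⟨k, ρ, hρ, rfl⟩ : ∃ k ρ, ρ < b ∧ p = b * k + ρ :=
    ⟨p / b, p % b, Nat.mod_lt _ hb, (Nat.div_add_mod p b).symm⟩
  rcases lt_or_ge (q - b * k) b with hsame | hnext
  · obtain ⟨ρ', rfl⟩ : ∃ ρ', q = b * k + ρ' := ⟨q - b * k, by omega⟩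
    exact abs_layer_sub_le_one_same_block k (by omega) (by omega) hA
  · obtain ⟨ρ', rfl⟩ : ∃ ρ', q = b * (k + 1) + ρ' :=
      ⟨q - b * (k + 1), by rw [Nat.mul_succ]; omega⟩
    exact abs_layer_sub_le_one_next_block k (by rw [Nat.mul_succ] at hqp; omega) hρ hA

lemma one_lt_abs_layer_sub {k q : ℕ} (hkq : b * k < q) (hqk : q ≤ b * k + b)
    (hA : ¬ A (b * k) q) : 1 < |layer A b (b * k) - layer A b q| := by
  have hb : 0 < b := by omega
  rcases lt_or_eq_of_le hqk with hsame | rfl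
  · obtain ⟨ρ', rfl⟩ : ∃ ρ', q = b * k + ρ' := ⟨q - b * k, by omega⟩
    have h := layer_sub_layer_same_block (A := A) k hb (ρ' := ρ') (by omega)
    rw [add_zero] at h
    have hρ'0 : ρ' ≠ 0 := by omega
    rw [h, abs_mul, abs_layerDir, one_mul]
    norm_num [layerOffset, hρ'0, hA]
  · have h := layer_sub_layer_next_block (A := A) k hb hb
    rw [add_zero, add_zero, Nat.mul_succ] at h
    rw [h, abs_mul, abs_layerDir, one_mul]
    norm_num [layerOffset, layerStep, Nat.mul_succ, hA]

end Layer

theorem exists_layer_separating_mod_eq (A : ℕ → ℕ → Prop) {b : ℕ} (hb : 0 < b) (r : ℕ) :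
    ∃ x : ℕ → ℝ,
      (∀ p q, p < q → q ≤ p + b → A p q → |x p - x q| ≤ 1) ∧
      ∀ p q, p % b = r → p < q → q ≤ p + b → ¬ A p q → 1 < |x p - x q| := by
  classical
  -- the shift by `s` moves the residue class of `r` onto the multiples of `b`
  set s := b - r % b
  let A' : ℕ → ℕ → Prop := fun p q => A (p - s) (q - s)
  have hA' (p q : ℕ) : A' (p + s) (q + s) ↔ A p q := by simp only [A', Nat.add_sub_cancel]
  refine ⟨fun p => layer A' b (p + s), fun p q hpq hqp hA => ?_, fun p q hp hpq hqp hA => ?_⟩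
  · exact abs_layer_sub_le_one (by omega) (by omega) ((hA' p q).2 hA)
  · have hps : p + s = b * (p / b + 1) := by
      have := Nat.div_add_mod p b
      have := Nat.mod_lt p hb
      subst hp
      simp only [s, Nat.mod_mod, Nat.mul_succ]
      omega
    have := one_lt_abs_layer_sub (A := A') (b := b) (k := p / b + 1) (q := q + s) (by omega) (by omega)
      (by rwa [← hps, hA'])
    rwa [← hps] at this

lemma abs_two_mul_div_sub_le_one_iff (b p q : ℕ) :
    |(2 * p / (2 * b + 1) : ℝ) - 2 * q / (2 * b + 1)| ≤ 1 ↔ p ≤ q + b ∧ q ≤ p + b := by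
  have hb : (0 : ℝ) < 2 * b + 1 := by positivity
  have key (m n : ℕ) : (2 * m - 2 * n : ℝ) ≤ 2 * b + 1 ↔ m ≤ n + b := by
    rw [show (2 * m - 2 * n : ℝ) ≤ 2 * b + 1 ↔ ((2 * m - 2 * n : ℤ) : ℝ) ≤ ((2 * b + 1 : ℤ) : ℝ)
      by push_cast; rfl, Int.cast_le]
    omega
  rw [← sub_div, abs_div, abs_of_pos hb, div_le_one hb, abs_le, neg_le, neg_sub, key, key,
    and_comm]

theorem hasCubeRep_of_adj_le_add (H : SimpleGraph ℕ) (b : ℕ)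
    (hH : ∀ p q, H.Adj p q → q ≤ p + b) : HasCubeRep H (b + 1) := by
  choose x hclose hsep using fun r : Fin b => exists_layer_separating_mod_eq H.Adj r.pos r
  refine ⟨fun p => Fin.cons (2 * p / (2 * b + 1) : ℝ) fun r => x r p, ?_⟩
  intro p q hne
  wlog hpq : p < q generalizing p q
  · rw [H.adj_comm, this q p hne.symm (by omega)]
    simp only [abs_sub_comm]
  simp only [Fin.forall_fin_succ, Fin.cons_zero, Fin.cons_succ, abs_two_mul_div_sub_le_one_iff]
  constructor
  · intro hA
    exact ⟨⟨by omega, hH p q hA⟩, fun r => hclose r p q hpq (hH p q hA) hA⟩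
  · rintro ⟨⟨-, hqp⟩, hlayer⟩
    by_contra hA
    have hb : 0 < b := by omega
    exact (hsep ⟨p % b, Nat.mod_lt _ hb⟩ p q rfl hpq hqp hA).not_ge (hlayer _)

end Cubicity

/-- for any finite simple graph `G`, `cub(G) ≤ bw(G) + 1`. -/
theorem cubicity_le_bandwidth_add_one {V : Type*} [Fintype V] (G : SimpleGraph V) :
    cubicity G ≤ bandwidth G + 1 := by
  obtain ⟨e, he⟩ := exists_equiv_width_le_bandwidth G
  let f : V ↪ ℕ := e.toEmbedding.trans Fin.valEmbedding
  have hwidth : ∀ p q, (G.map f).Adj p q → q ≤ p + bandwidth G := by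
    rintro _ _ ⟨-, u, v, huv, rfl, rfl⟩
    have := abs_le.1 (he u v huv)
    simp only [f, Function.Embedding.trans_apply, Equiv.coe_toEmbedding, Fin.valEmbedding_apply]
    omega
  have hrep := (Cubicity.hasCubeRep_of_adj_le_add _ _ hwidth).comap f
  rw [SimpleGraph.comap_map_eq] at hrep
  exact Nat.sInf_le hrep
end

section
/- Let G be a graph on n vertices with a linear ordering u_1,...,u_n of width b. Define f_0 : V → ℝ by f_0(u_j) = j for j ≤ b; f_0(u_j) = f_0(u_{j−b}) + b if j > b and (u_{j−b}, u_j) ∈ E(G); and f_0(u_j) = f_0(u_{j−b}) + b + 1/n² if j > b and (u_{j−b}, u_j) ∉ E(G). Then the graph I_0 on V with u_j adjacent to u_k (j ≠ k) iff |f_0(u_j) − f_0(u_k)| ≤ b is a supergraph of G. -/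
/-- `G` is a graph on vertices `u_0, …, u_{n-1}` (0-indexed) whose
natural linear ordering has width `b`.  The map `f0` is defined by
`f0 (u_j) = j + 1` for the first `b` vertices, and for later vertices by
`f0 (u_j) = f0 (u_{j-b}) + b` or `f0 (u_j) = f0 (u_{j-b}) + b + 1/n²` according to
whether `u_{j-b}` and `u_j` are adjacent.  Then the graph `I_0` in which `u_j` and
`u_k` (distinct) are adjacent iff `|f0 (u_j) - f0 (u_k)| ≤ b` is a supergraph of `G`:
every edge of `G` satisfies `|f0 (u_j) - f0 (u_k)| ≤ b`. -/
theorem I0_is_supergraph (n b : ℕ) (hb : 0 < b) (G : SimpleGraph (Fin n))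
    (hwidth : ∀ j k : Fin n, G.Adj j k → |((j : ℕ) : ℤ) - ((k : ℕ) : ℤ)| ≤ (b : ℤ))
    (f0 : Fin n → ℝ)
    (hbase : ∀ j : Fin n, (j : ℕ) < b → f0 j = ((j : ℕ) : ℝ) + 1)
    (hadj : ∀ j : Fin n, b ≤ (j : ℕ) →
      G.Adj ⟨(j : ℕ) - b, Nat.lt_of_le_of_lt (Nat.sub_le _ _) j.isLt⟩ j →
      f0 j = f0 ⟨(j : ℕ) - b, Nat.lt_of_le_of_lt (Nat.sub_le _ _) j.isLt⟩ + (b : ℝ))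
    (hnadj : ∀ j : Fin n, b ≤ (j : ℕ) →
      ¬ G.Adj ⟨(j : ℕ) - b, Nat.lt_of_le_of_lt (Nat.sub_le _ _) j.isLt⟩ j →
      f0 j = f0 ⟨(j : ℕ) - b, Nat.lt_of_le_of_lt (Nat.sub_le _ _) j.isLt⟩ + (b : ℝ)
        + 1 / ((n : ℝ) ^ 2)) :
    ∀ j k : Fin n, G.Adj j k → |f0 j - f0 k| ≤ (b : ℝ) := by
  -- handle n = 0 (vacuous)
  rcases Nat.eq_zero_or_pos n with rfl | hn
  · intro j; exact absurd j.isLt (by omega)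
  have hn2 : (0:ℝ) < (n:ℝ)^2 := by positivity
  -- the "step" value is either b or b + 1/n²
  have hstep0 : ∀ j : Fin n, b ≤ (j : ℕ) →
      ∃ ε : ℝ, 0 ≤ ε ∧ ε ≤ 1 / (n:ℝ)^2 ∧
        f0 j = f0 ⟨(j : ℕ) - b, Nat.lt_of_le_of_lt (Nat.sub_le _ _) j.isLt⟩ + (b : ℝ) + ε := by
    intro j hj
    by_cases h : G.Adj ⟨(j : ℕ) - b, Nat.lt_of_le_of_lt (Nat.sub_le _ _) j.isLt⟩ j
    · exact ⟨0, le_refl _, by positivity, by rw [hadj j hj h]; ring⟩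
    · exact ⟨1 / (n:ℝ)^2, by positivity, le_refl _, hnadj j hj h⟩
  -- consecutive differences
  have hstep : ∀ j : ℕ, ∀ h : j + 1 < n,
      |f0 ⟨j + 1, h⟩ - f0 ⟨j, by omega⟩ - 1| ≤ ((j:ℝ) + 1) / (n:ℝ)^2 := by
    intro j
    induction j using Nat.strong_induction_on with
    | _ j ih =>
      intro h
      rcases lt_or_ge (j + 1) b with hlt | hge
      · -- both below b
        rw [hbase ⟨j + 1, h⟩ (by simpa using hlt), hbase ⟨j, by omega⟩ (by simp; omega)]
        push_cast
        simp
        positivity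
      · -- j + 1 ≥ b
        obtain ⟨ε, hε0, hε1, hεeq⟩ := hstep0 ⟨j + 1, h⟩ (by simpa using hge)
        rcases Nat.lt_or_ge j b with hjb | hjb
        · -- j + 1 = b exactly
          have hjb' : j + 1 = b := by omega
          have hsub : (j + 1) - b = 0 := by omega
          rw [hεeq, hbase ⟨j, by omega⟩ hjb]
          simp only [hsub]
          rw [hbase ⟨0, by omega⟩ (by simpa using hb)]
          have hbr : (b:ℝ) = (j:ℝ) + 1 := by exact_mod_cast congrArg (Nat.cast : ℕ → ℝ) hjb'.symm
          simp only [Fin.val_mk, Nat.cast_zero, hbr]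
          rw [show (0:ℝ) + 1 + ((j:ℝ) + 1) + ε - ((j:ℝ) + 1) - 1 = ε from by ring,
            abs_of_nonneg hε0]
          calc ε ≤ 1 / (n:ℝ)^2 := hε1
            _ ≤ ((j:ℝ) + 1) / (n:ℝ)^2 := by
              gcongr
              have : (0:ℝ) ≤ (j:ℝ) := Nat.cast_nonneg j
              linarith
        · -- j ≥ b : recursion
          obtain ⟨ε', hε'0, hε'1, hε'eq⟩ := hstep0 ⟨j, by omega⟩ (by simpa using hjb)
          have h1 : (j + 1) - b = (j - b) + 1 := by omega
          have hlt2 : (j - b) + 1 < n := by omega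
          have ihh := ih (j - b) (by omega) hlt2
          rw [hεeq, hε'eq]
          simp only [h1] at *
          have : f0 ⟨j - b + 1, by omega⟩ + (b:ℝ) + ε -
              (f0 ⟨j - b, by omega⟩ + (b:ℝ) + ε') - 1 =
              (f0 ⟨j - b + 1, hlt2⟩ - f0 ⟨j - b, by omega⟩ - 1) + (ε - ε') := by ring
          rw [this]
          calc |(f0 ⟨j - b + 1, hlt2⟩ - f0 ⟨j - b, by omega⟩ - 1) + (ε - ε')|
              ≤ |f0 ⟨j - b + 1, hlt2⟩ - f0 ⟨j - b, by omega⟩ - 1| + |ε - ε'| := abs_add_le _ _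
            _ ≤ (((j - b : ℕ):ℝ) + 1) / (n:ℝ)^2 + 1 / (n:ℝ)^2 := by
                apply add_le_add ihh
                rw [abs_sub_le_iff]
                constructor <;> linarith
            _ = (((j - b : ℕ):ℝ) + 2) / (n:ℝ)^2 := by ring
            _ ≤ ((j:ℝ) + 1) / (n:ℝ)^2 := by
                have hle : ((j - b : ℕ):ℝ) + 2 ≤ (j:ℝ) + 1 := by
                  exact_mod_cast (show (j - b) + 2 ≤ j + 1 by omega)
                exact div_le_div_of_nonneg_right hle hn2.le

  -- summation: |f0 (j+d) - f0 j - d| ≤ d / n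
  have hsum : ∀ d : ℕ, ∀ j : ℕ, ∀ h : j + d < n,
      |f0 ⟨j + d, h⟩ - f0 ⟨j, by omega⟩ - (d:ℝ)| ≤ (d:ℝ) / (n:ℝ) := by
    intro d
    induction d with
    | zero => intro j h; simp
    | succ d ihd =>
      intro j h
      have h1 : j + d < n := by omega
      have h2 : (j + d) + 1 < n := by omega
      have e : f0 ⟨j + (d+1), h⟩ - f0 ⟨j, by omega⟩ - ((d+1:ℕ):ℝ) =
          (f0 ⟨(j + d) + 1, h2⟩ - f0 ⟨j + d, h1⟩ - 1) +
          (f0 ⟨j + d, h1⟩ - f0 ⟨j, by omega⟩ - (d:ℝ)) := by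
        rw [show (⟨j + (d+1), h⟩ : Fin n) = ⟨(j + d) + 1, h2⟩ from rfl]
        push_cast
        ring
      rw [e]
      have ha : |f0 ⟨(j + d) + 1, h2⟩ - f0 ⟨j + d, h1⟩ - 1| ≤ 1 / (n:ℝ) := by
        refine le_trans (hstep (j + d) h2) ?_
        have hle : ((j+d:ℕ):ℝ) + 1 ≤ (n:ℝ) := by exact_mod_cast (show (j+d) + 1 ≤ n by omega)
        rw [div_le_div_iff₀ hn2 (by exact_mod_cast hn)]
        calc (((j+d:ℕ):ℝ) + 1) * (n:ℝ) ≤ (n:ℝ) * (n:ℝ) := by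
              apply mul_le_mul_of_nonneg_right hle (by positivity)
          _ = 1 * (n:ℝ)^2 := by ring
      calc |(f0 ⟨(j + d) + 1, h2⟩ - f0 ⟨j + d, h1⟩ - 1) +
            (f0 ⟨j + d, h1⟩ - f0 ⟨j, by omega⟩ - (d:ℝ))|
          ≤ |f0 ⟨(j + d) + 1, h2⟩ - f0 ⟨j + d, h1⟩ - 1| +
            |f0 ⟨j + d, h1⟩ - f0 ⟨j, by omega⟩ - (d:ℝ)| := abs_add_le _ _
        _ ≤ 1 / (n:ℝ) + (d:ℝ) / (n:ℝ) := add_le_add ha (ihd j h1)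
        _ = ((d+1:ℕ):ℝ) / (n:ℝ) := by push_cast; ring
  -- main argument, for ordered pairs
  suffices H : ∀ j k : Fin n, G.Adj j k → (j:ℕ) < (k:ℕ) → |f0 j - f0 k| ≤ (b:ℝ) by
    intro j k hjk
    rcases lt_trichotomy (j:ℕ) (k:ℕ) with hlt | heq | hgt
    · exact H j k hjk hlt
    · exact absurd (Fin.ext heq) hjk.ne
    · rw [abs_sub_comm]; exact H k j hjk.symm hgt
  intro j k hjk hlt
  have hd : (k:ℕ) - (j:ℕ) ≤ b := by
    have := hwidth j k hjk
    rw [abs_le] at this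
    omega
  set d : ℕ := (k:ℕ) - (j:ℕ) with hdef
  have hkd : (j:ℕ) + d < n := by omega
  have hk : k = ⟨(j:ℕ) + d, hkd⟩ := Fin.ext (by simp only [Fin.val_mk]; omega)
  rcases eq_or_lt_of_le hd with heq | hlt2
  · -- d = b : exact step
    have hbk : b ≤ (k:ℕ) := by omega
    have hjeq : (⟨(k:ℕ) - b, Nat.lt_of_le_of_lt (Nat.sub_le _ _) k.isLt⟩ : Fin n) = j :=
      Fin.ext (by simp only [Fin.val_mk]; omega)
    have hadjk : G.Adj ⟨(k:ℕ) - b, Nat.lt_of_le_of_lt (Nat.sub_le _ _) k.isLt⟩ k := by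
      rw [hjeq]; exact hjk
    have := hadj k hbk hadjk
    rw [hjeq] at this
    rw [this]
    rw [show f0 j - (f0 j + (b:ℝ)) = -(b:ℝ) from by ring, abs_neg,
      abs_of_nonneg (by positivity)]
  · -- d < b
    have hsb : |f0 ⟨(j:ℕ) + d, hkd⟩ - f0 j - (d:ℝ)| ≤ (d:ℝ) / (n:ℝ) := hsum d (j:ℕ) hkd
    rw [abs_sub_comm, hk]
    have habs : |f0 ⟨(j:ℕ) + d, hkd⟩ - f0 j| ≤ (d:ℝ) + (d:ℝ)/(n:ℝ) := by
      calc |f0 ⟨(j:ℕ) + d, hkd⟩ - f0 j|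
          ≤ |f0 ⟨(j:ℕ) + d, hkd⟩ - f0 j - (d:ℝ)| + |(d:ℝ)| := by
            have h3 := abs_add_le (f0 ⟨(j:ℕ) + d, hkd⟩ - f0 j - (d:ℝ)) ((d:ℝ))
            simpa using h3
        _ ≤ (d:ℝ)/(n:ℝ) + (d:ℝ) := by
            refine add_le_add hsb ?_
            rw [abs_of_nonneg (by positivity)]
        _ = (d:ℝ) + (d:ℝ)/(n:ℝ) := by ring
    refine le_trans habs ?_
    have hdn : (d:ℝ)/(n:ℝ) ≤ 1 := by
      rw [div_le_one (by exact_mod_cast hn)]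
      exact_mod_cast (show d ≤ n by omega)
    have hdb : (d:ℝ) ≤ (b:ℝ) - 1 := by
      have : (d:ℝ) + 1 ≤ (b:ℝ) := by exact_mod_cast (show d + 1 ≤ b by omega)
      linarith
    linarith
end

section
/- Let G be a graph on n vertices with a linear ordering u_1,...,u_n of width b. For fixed i with 1 ≤ i ≤ b, partition the vertices u_i, u_{i+1}, ..., u_n into consecutive blocks B_0, B_1, ... of size b (the last possibly smaller), where B_t starts at vertex s_t = u_{i+bt}. Define f_i(u_j) = 2 for j < i, and for u in block B_t: f_i(u) = t if u = s_t, f_i(u) = t+2 if u is adjacent to s_t in G, and f_i(u) = t+3 otherwise. Then the graph I_i on V with u adjacent to v (u ≠ v) iff |f_i(u) − f_i(v)| ≤ 2 is a supergraph of G. -/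
/-- `G` is a graph on vertices `u_0, …, u_{n-1}` (0-indexed) whose natural
linear ordering has width `b`.  Fix `i < b`.  Vertices `u_j` with `j ≥ i` are divided
into consecutive blocks of size `b`, block `B_t` starting at `s_t = u_{i+bt}`
(so `u_j` lies in block `t = (j-i)/b` and the start of its block is
`u_{j - ((j-i) % b)}`).  `f` maps the vertices before `u_i` to `2`, the block
starts `s_t` to `t`, other vertices of block `t` adjacent to `s_t` to `t+2`,
and the remaining vertices of block `t` to `t+3`.  Then the graph `I_i` in which
distinct vertices `u, v` are adjacent iff `|f u - f v| ≤ 2` is a supergraph of `G`. -/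
theorem Ii_is_supergraph (n b i : ℕ) (hb : 0 < b) (hib : i < b) (G : SimpleGraph (Fin n))
    (hwidth : ∀ u v : Fin n, G.Adj u v → |((u : ℕ) : ℤ) - ((v : ℕ) : ℤ)| ≤ (b : ℤ))
    (f : Fin n → ℝ)
    (hsmall : ∀ j : Fin n, (j : ℕ) < i → f j = 2)
    (hstart : ∀ j : Fin n, i ≤ (j : ℕ) → ((j : ℕ) - i) % b = 0 →
      f j = ((((j : ℕ) - i) / b : ℕ) : ℝ))
    (hadj : ∀ j : Fin n, i ≤ (j : ℕ) → ((j : ℕ) - i) % b ≠ 0 →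
      G.Adj ⟨(j : ℕ) - ((j : ℕ) - i) % b, Nat.lt_of_le_of_lt (Nat.sub_le _ _) j.isLt⟩ j →
      f j = ((((j : ℕ) - i) / b : ℕ) : ℝ) + 2)
    (hnadj : ∀ j : Fin n, i ≤ (j : ℕ) → ((j : ℕ) - i) % b ≠ 0 →
      ¬ G.Adj ⟨(j : ℕ) - ((j : ℕ) - i) % b, Nat.lt_of_le_of_lt (Nat.sub_le _ _) j.isLt⟩ j →
      f j = ((((j : ℕ) - i) / b : ℕ) : ℝ) + 3) :
    ∀ u v : Fin n, G.Adj u v → |f u - f v| ≤ 2 := by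
  suffices key : ∀ u v : Fin n, G.Adj u v → (u : ℕ) < (v : ℕ) → |f u - f v| ≤ 2 by
    intro u v huv
    rcases lt_trichotomy (u : ℕ) (v : ℕ) with h | h | h
    · exact key u v huv h
    · exact absurd (Fin.ext h) huv.ne
    · rw [abs_sub_comm]; exact key v u huv.symm h
  intro u v huv hlt
  have hba : (v : ℕ) ≤ (u : ℕ) + b := by
    have := abs_le.mp (hwidth u v huv)
    omega
  by_cases hvi : (v : ℕ) < i
  · rw [hsmall u (lt_trans hlt hvi), hsmall v hvi]; norm_num
  push_neg at hvi
  by_cases hui : (u : ℕ) < i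
  · have hfu := hsmall u hui
    have hc : (v : ℕ) - i < b := by omega
    have ht : ((v : ℕ) - i) / b = 0 := Nat.div_eq_of_lt hc
    by_cases hr : ((v : ℕ) - i) % b = 0
    · have hfv := hstart v hvi hr
      rw [hfu, hfv, ht]; norm_num
    · by_cases hAdj : G.Adj ⟨(v : ℕ) - ((v : ℕ) - i) % b,
          Nat.lt_of_le_of_lt (Nat.sub_le _ _) v.isLt⟩ v
      · rw [hfu, hadj v hvi hr hAdj, ht]; norm_num
      · rw [hfu, hnadj v hvi hr hAdj, ht]; norm_num
  push_neg at hui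
  have hdu := Nat.div_add_mod ((u : ℕ) - i) b
  have hdv := Nat.div_add_mod ((v : ℕ) - i) b
  have hru := Nat.mod_lt ((u : ℕ) - i) hb
  have hrv := Nat.mod_lt ((v : ℕ) - i) hb
  set t := ((u : ℕ) - i) / b with htdef
  set r := ((u : ℕ) - i) % b with hrdef
  set t' := ((v : ℕ) - i) / b with htdef'
  set r' := ((v : ℕ) - i) % b with hrdef'
  clear_value t r t' r'
  -- basic block comparisons
  have h1 : t ≤ t' := by
    rw [htdef, htdef']
    exact Nat.div_le_div_right (Nat.sub_le_sub_right (le_of_lt hlt) i)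
  have h2 : t' ≤ t + 1 := by
    rw [htdef, htdef']
    have h : ((v : ℕ) - i) / b ≤ (((u : ℕ) - i) + b) / b :=
      Nat.div_le_div_right (by omega)
    rwa [Nat.add_div_right _ hb] at h
  by_cases hr : r = 0
  · have hfu : f u = (t : ℝ) := by rw [hstart u hui (hrdef ▸ hr), ← htdef]
    by_cases hr' : r' = 0
    · have ht' : t' = t + 1 := by
        rcases (by omega : t' = t ∨ t' = t + 1) with h | h
        · rw [h] at hdv; omega
        · exact h
      have hfv : f v = (t' : ℝ) := by rw [hstart v hvi (hrdef' ▸ hr'), ← htdef']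
      rw [hfu, hfv, ht', abs_sub_le_iff]; push_cast; constructor <;> linarith
    · have ht' : t' = t := by
        rcases (by omega : t' = t ∨ t' = t + 1) with h | h
        · exact h
        · rw [h, Nat.mul_succ] at hdv; omega
      rw [ht'] at hdv
      have hstart_eq : (⟨(v : ℕ) - r', Nat.lt_of_le_of_lt (Nat.sub_le _ _) v.isLt⟩ : Fin n)
          = u := by
        apply Fin.ext
        simp only
        omega
      have hAdj : G.Adj ⟨(v : ℕ) - ((v : ℕ) - i) % b,
          Nat.lt_of_le_of_lt (Nat.sub_le _ _) v.isLt⟩ v := by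
        rw [← hrdef']
        rw [hstart_eq]; exact huv
      have hfv : f v = (t' : ℝ) + 2 := by
        rw [hadj v hvi (hrdef' ▸ hr') hAdj, ← htdef']
      rw [hfu, hfv, ht', abs_sub_le_iff]; push_cast; constructor <;> linarith
  · have hfu : f u = (t : ℝ) + 2 ∨ f u = (t : ℝ) + 3 := by
      by_cases hAdj : G.Adj ⟨(u : ℕ) - ((u : ℕ) - i) % b,
          Nat.lt_of_le_of_lt (Nat.sub_le _ _) u.isLt⟩ u
      · left; rw [hadj u hui (hrdef ▸ hr) hAdj, ← htdef]
      · right; rw [hnadj u hui (hrdef ▸ hr) hAdj, ← htdef]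
    by_cases hr' : r' = 0
    · have ht' : t' = t + 1 := by
        rcases (by omega : t' = t ∨ t' = t + 1) with h | h
        · rw [h] at hdv; omega
        · exact h
      have hfv : f v = (t' : ℝ) := by rw [hstart v hvi (hrdef' ▸ hr'), ← htdef']
      rcases hfu with hfu | hfu <;>
        · rw [hfu, hfv, ht', abs_sub_le_iff]; push_cast; constructor <;> linarith
    · have hfv : f v = (t' : ℝ) + 2 ∨ f v = (t' : ℝ) + 3 := by
        by_cases hAdj : G.Adj ⟨(v : ℕ) - ((v : ℕ) - i) % b,
            Nat.lt_of_le_of_lt (Nat.sub_le _ _) v.isLt⟩ v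
        · left; rw [hadj v hvi (hrdef' ▸ hr') hAdj, ← htdef']
        · right; rw [hnadj v hvi (hrdef' ▸ hr') hAdj, ← htdef']
      rcases (by omega : t' = t ∨ t' = t + 1) with ht' | ht' <;>
          rcases hfu with hfu | hfu <;> rcases hfv with hfv | hfv <;>
        · rw [hfu, hfv, ht', abs_sub_le_iff]; push_cast; constructor <;> linarith
end

section
/- Let G be a graph on n vertices with a linear ordering u_1,...,u_n of width b, and let u_j, u_k (j < k) be non-adjacent vertices of G with k − j ≥ b. Define f_0 as: f_0(u_j) = j for j ≤ b; f_0(u_j) = f_0(u_{j−b}) + b if j > b and (u_{j−b}, u_j) ∈ E(G); f_0(u_j) = f_0(u_{j−b}) + b + 1/n² otherwise. Then f_0(u_k) − f_0(u_j) > b. -/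
/-!
Every step `u_i ↦ u_{i+b}` raises `f₀` by `b`, plus a slack `ε = 1/n²` at non-edges. Hence
`m + 1 ≤ f₀(u_m) ≤ m + 1 + m ε`, and as `m ε < 1` two vertices at distance more than `b`
are separated by more than `b`. At distance exactly `b` the pair is itself a step, and it
is a non-edge, so the slack `ε > 0` is paid.
-/

section Steps

variable {n b : ℕ} {f : Fin n → ℝ} {ε : ℝ}

theorem Fin.exists_add_eq_of_le (j : Fin n) (hbj : b ≤ (j : ℕ)) : ∃ i : Fin n, (i : ℕ) + b = j :=
  ⟨⟨j - b, by omega⟩, by simp only; omega⟩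

variable (hbase : ∀ j : Fin n, (j : ℕ) < b → f j = (j : ℕ) + 1)
  (hstep : ∀ i j : Fin n, (i : ℕ) + b = j → f i + b ≤ f j ∧ f j ≤ f i + b + ε)
include hbase hstep

theorem coe_add_one_le_of_steps (hb : 0 < b) (m : Fin n) : ((m : ℕ) : ℝ) + 1 ≤ f m := by
  induction m using WellFoundedLT.induction with
  | _ m ih =>
    rcases lt_or_ge (m : ℕ) b with hmb | hmb
    · exact (hbase m hmb).ge
    obtain ⟨i, hi⟩ := m.exists_add_eq_of_le hmb
    have hfi := ih i (Fin.lt_def.2 (by omega))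
    have hcast : ((i : ℕ) : ℝ) + b = (m : ℕ) := by exact_mod_cast hi
    linarith [(hstep i m hi).1]

theorem le_coe_add_one_add_mul_of_steps (hb : 0 < b) (hε : 0 ≤ ε) (m : Fin n) :
    f m ≤ ((m : ℕ) : ℝ) + 1 + (m : ℕ) * ε := by
  induction m using WellFoundedLT.induction with
  | _ m ih =>
    rcases lt_or_ge (m : ℕ) b with hmb | hmb
    · rw [hbase m hmb]
      exact le_add_of_nonneg_right (by positivity)
    obtain ⟨i, hi⟩ := m.exists_add_eq_of_le hmb
    have hfi := ih i (Fin.lt_def.2 (by omega))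
    have hcast : ((i : ℕ) : ℝ) + b = (m : ℕ) := by exact_mod_cast hi
    have hb1 : (1 : ℝ) ≤ b := by exact_mod_cast hb
    nlinarith [(hstep i m hi).2]

end Steps

theorem f0_separates_far_nonedges_general (n b : ℕ) (hb : 0 < b) (G : SimpleGraph (Fin n))
    (f0 : Fin n → ℝ)
    (hbase : ∀ j : Fin n, (j : ℕ) < b → f0 j = ((j : ℕ) : ℝ) + 1)
    (hadj : ∀ j : Fin n, b ≤ (j : ℕ) →
      G.Adj ⟨(j : ℕ) - b, Nat.lt_of_le_of_lt (Nat.sub_le _ _) j.isLt⟩ j →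
      f0 j = f0 ⟨(j : ℕ) - b, Nat.lt_of_le_of_lt (Nat.sub_le _ _) j.isLt⟩ + (b : ℝ))
    (hnadj : ∀ j : Fin n, b ≤ (j : ℕ) →
      ¬ G.Adj ⟨(j : ℕ) - b, Nat.lt_of_le_of_lt (Nat.sub_le _ _) j.isLt⟩ j →
      f0 j = f0 ⟨(j : ℕ) - b, Nat.lt_of_le_of_lt (Nat.sub_le _ _) j.isLt⟩ + (b : ℝ)
        + 1 / ((n : ℝ) ^ 2))
    (j k : Fin n) (hfar : b ≤ (k : ℕ) - (j : ℕ))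
    (hna : ¬ G.Adj j k) :
    f0 k - f0 j > (b : ℝ) := by
  have hn : (0 : ℝ) < n := by exact_mod_cast j.pos
  have hε : (0 : ℝ) < 1 / (n : ℝ) ^ 2 := by positivity
  have hback : ∀ i l : Fin n, (i : ℕ) + b = l → (⟨(l : ℕ) - b, by omega⟩ : Fin n) = i :=
    fun i l hil ↦ Fin.ext (by simp only; omega)
  have hstep : ∀ i l : Fin n, (i : ℕ) + b = l →
      f0 i + b ≤ f0 l ∧ f0 l ≤ f0 i + b + 1 / (n : ℝ) ^ 2 := by
    intro i l hil
    by_cases hA : G.Adj i l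
    · rw [hadj l (by omega) (hback i l hil ▸ hA), hback i l hil]
      constructor <;> linarith
    · rw [hnadj l (by omega) (hback i l hil ▸ hA), hback i l hil]
      constructor <;> linarith
  rcases hfar.eq_or_lt with hexact | hbeyond
  · rw [hnadj k (by omega) (hback j k (by omega) ▸ hna), hback j k (by omega)]
    linarith
  have hk := coe_add_one_le_of_steps hbase hstep hb k
  have hj := le_coe_add_one_add_mul_of_steps hbase hstep hb hε.le j
  have hdist : ((j : ℕ) : ℝ) + b + 1 ≤ (k : ℕ) := by exact_mod_cast (by omega : (j : ℕ) + b + 1 ≤ k)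
  have hslack : ((j : ℕ) : ℝ) * (1 / (n : ℝ) ^ 2) < 1 := by
    have hjn : ((j : ℕ) : ℝ) + 1 ≤ n := by exact_mod_cast j.isLt
    rw [mul_one_div, div_lt_one (by positivity)]
    nlinarith
  linarith

/-- with `f0` defined as in the construction of `I_0`
(see Statement 2), for any pair of non-adjacent vertices `u_j, u_k` with
`j < k` and `k - j ≥ b` we have `f0 (u_k) - f0 (u_j) > b`. -/
theorem f0_separates_far_nonedges (n b : ℕ) (hb : 0 < b) (G : SimpleGraph (Fin n))
    (hwidth : ∀ j k : Fin n, G.Adj j k → |((j : ℕ) : ℤ) - ((k : ℕ) : ℤ)| ≤ (b : ℤ))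
    (f0 : Fin n → ℝ)
    (hbase : ∀ j : Fin n, (j : ℕ) < b → f0 j = ((j : ℕ) : ℝ) + 1)
    (hadj : ∀ j : Fin n, b ≤ (j : ℕ) →
      G.Adj ⟨(j : ℕ) - b, Nat.lt_of_le_of_lt (Nat.sub_le _ _) j.isLt⟩ j →
      f0 j = f0 ⟨(j : ℕ) - b, Nat.lt_of_le_of_lt (Nat.sub_le _ _) j.isLt⟩ + (b : ℝ))
    (hnadj : ∀ j : Fin n, b ≤ (j : ℕ) →
      ¬ G.Adj ⟨(j : ℕ) - b, Nat.lt_of_le_of_lt (Nat.sub_le _ _) j.isLt⟩ j →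
      f0 j = f0 ⟨(j : ℕ) - b, Nat.lt_of_le_of_lt (Nat.sub_le _ _) j.isLt⟩ + (b : ℝ)
        + 1 / ((n : ℝ) ^ 2))
    (j k : Fin n) (hjk : (j : ℕ) < (k : ℕ)) (hfar : b ≤ (k : ℕ) - (j : ℕ))
    (hna : ¬ G.Adj j k) :
    f0 k - f0 j > (b : ℝ) :=
  f0_separates_far_nonedges_general n b hb G f0 hbase hadj hnadj j k hfar hna
end

section
/- Let G be a graph on n vertices with a linear ordering u_1,...,u_n, and suppose u_j and u_k (j < k) are non-adjacent with k − j < b. Let l = j mod b (with 1 ≤ l ≤ b), and define f_l as in the block construction: partition u_l,...,u_n into consecutive blocks of size b starting at u_l, with block B_t starting at s_t = u_{l+bt}; set f_l(u) = t if u = s_t, f_l(u) = t+2 if u adjacent to s_t, f_l(u) = t+3 otherwise (and f_l(u_m) = 2 for m < l). Then |f_l(u_j) − f_l(u_k)| > 2. -/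
/-- `G` is a graph on vertices `u_0, …, u_{n-1}` (0-indexed), and
`u_j, u_k` (`j < k`) are non-adjacent with `k - j < b`.  Let `l = j % b` and let
`f` be the block map for the graph `I_l` (blocks of size `b` starting at `u_l`,
block `B_t` starting at `s_t = u_{l+bt}`; `f u = t` for `u = s_t`, `t+2` for other
vertices of `B_t` adjacent to `s_t`, `t+3` for the rest, and `f u_m = 2` for `m < l`).
Then `|f (u_j) - f (u_k)| > 2`. -/
theorem fl_separates_close_nonedges (n b : ℕ) (hb : 0 < b) (G : SimpleGraph (Fin n))
    (j k : Fin n) (hjk : (j : ℕ) < (k : ℕ)) (hclose : (k : ℕ) - (j : ℕ) < b)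
    (hna : ¬ G.Adj j k)
    (f : Fin n → ℝ)
    (hsmall : ∀ m : Fin n, (m : ℕ) < (j : ℕ) % b → f m = 2)
    (hstart : ∀ m : Fin n, (j : ℕ) % b ≤ (m : ℕ) → ((m : ℕ) - (j : ℕ) % b) % b = 0 →
      f m = ((((m : ℕ) - (j : ℕ) % b) / b : ℕ) : ℝ))
    (hadj : ∀ m : Fin n, (j : ℕ) % b ≤ (m : ℕ) → ((m : ℕ) - (j : ℕ) % b) % b ≠ 0 →
      G.Adj ⟨(m : ℕ) - ((m : ℕ) - (j : ℕ) % b) % b,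
        Nat.lt_of_le_of_lt (Nat.sub_le _ _) m.isLt⟩ m →
      f m = ((((m : ℕ) - (j : ℕ) % b) / b : ℕ) : ℝ) + 2)
    (hnadj : ∀ m : Fin n, (j : ℕ) % b ≤ (m : ℕ) → ((m : ℕ) - (j : ℕ) % b) % b ≠ 0 →
      ¬ G.Adj ⟨(m : ℕ) - ((m : ℕ) - (j : ℕ) % b) % b,
        Nat.lt_of_le_of_lt (Nat.sub_le _ _) m.isLt⟩ m →
      f m = ((((m : ℕ) - (j : ℕ) % b) / b : ℕ) : ℝ) + 3) :
    |f j - f k| > 2 := by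
  have hlj : (j : ℕ) % b ≤ (j : ℕ) := Nat.mod_le _ _
  have hlk : (j : ℕ) % b ≤ (k : ℕ) := le_trans hlj (le_of_lt hjk)
  have hj1 : (j : ℕ) - (j : ℕ) % b = b * ((j : ℕ) / b) := by
    have := Nat.div_add_mod (j : ℕ) b
    omega
  have hj2 : ((j : ℕ) - (j : ℕ) % b) % b = 0 := by
    rw [hj1]; exact Nat.mul_mod_right _ _
  have hj3 : ((j : ℕ) - (j : ℕ) % b) / b = (j : ℕ) / b := by
    rw [hj1]; exact Nat.mul_div_cancel_left _ hb
  have hk1 : (k : ℕ) - (j : ℕ) % b = b * ((j : ℕ) / b) + ((k : ℕ) - (j : ℕ)) := by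
    omega
  have hk2 : ((k : ℕ) - (j : ℕ) % b) % b = (k : ℕ) - (j : ℕ) := by
    rw [hk1, Nat.mul_add_mod]; exact Nat.mod_eq_of_lt hclose
  have hk3 : ((k : ℕ) - (j : ℕ) % b) / b = (j : ℕ) / b := by
    rw [hk1, Nat.mul_add_div hb, Nat.div_eq_of_lt hclose, Nat.add_zero]
  have hkne : ((k : ℕ) - (j : ℕ) % b) % b ≠ 0 := by omega
  have hfj : f j = (((j : ℕ) / b : ℕ) : ℝ) := by
    have := hstart j hlj hj2
    rwa [hj3] at this
  have hstartk : (⟨(k : ℕ) - ((k : ℕ) - (j : ℕ) % b) % b,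
      Nat.lt_of_le_of_lt (Nat.sub_le _ _) k.isLt⟩ : Fin n) = j := by
    apply Fin.ext
    simp only [hk2]
    omega
  have hfk : f k = (((j : ℕ) / b : ℕ) : ℝ) + 3 := by
    have hna' : ¬ G.Adj (⟨(k : ℕ) - ((k : ℕ) - (j : ℕ) % b) % b,
        Nat.lt_of_le_of_lt (Nat.sub_le _ _) k.isLt⟩ : Fin n) k := by
      rw [hstartk]; exact hna
    have := hnadj k hlk hkne hna'
    rwa [hk3] at this
  rw [hfj, hfk]
  rw [abs_sub_comm]
  rw [show (((j : ℕ) / b : ℕ) : ℝ) + 3 - (((j : ℕ) / b : ℕ) : ℝ) = 3 by ring]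
  norm_num
end

section
/- If G is a co-comparability graph with maximum degree Δ, then bw(G) ≤ 2Δ − 1, and consequently cub(G) ≤ 2Δ. -/
/-- `G` is a co-comparability graph: its complement admits a transitive orientation,
i.e. there is a strict partial order `r` on the vertices such that distinct vertices
are non-adjacent iff they are comparable under `r`. -/
def IsCoComparabilityGraph {V : Type*} (G : SimpleGraph V) : Prop :=
  ∃ r : V → V → Prop, (∀ a b c, r a b → r b c → r a c) ∧ (∀ a, ¬ r a a) ∧
    ∀ u v : V, u ≠ v → (¬ G.Adj u v ↔ (r u v ∨ r v u))

/-!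
Number the vertices along a linear extension of the transitive orientation `≺` of the
complement. If `u v` is an edge and `w` lies strictly between them, then `w` is adjacent to `u`
or to `v`: otherwise `u ≺ w ≺ v` would make `u` and `v` comparable. So at most `2Δ - 2`
vertices lie between the ends of an edge, and the numbering has stretch at most `2Δ - 1`.

A numbering `f` of stretch `b` yields unit cubes in dimension `b + 1`. One coordinate is `f / b`,
perturbed by a tie-break that separates two vertices at distance exactly `b` iff they are
non-adjacent; it separates every non-adjacent pair at distance at least `b`. For each residue
`j` mod `b` there is a coordinate `min (f x / (b+1)) (min_{f q ≡ j} f q / (b+1) + d(q, x) - 2)`: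
it moves by at most `1` along edges, and it separates each `q` with `f q ≡ j` from its
non-neighbours among the next `b - 1` positions.
-/

section

variable {V : Type*}

def StretchLE (G : SimpleGraph V) (f : V → ℕ) (b : ℕ) : Prop :=
  ∀ ⦃u v⦄, G.Adj u v → f v ≤ f u + b

theorem StretchLE.le_add_length_mul {G : SimpleGraph V} {f : V → ℕ} {b : ℕ}
    (hs : StretchLE G f b) {x y : V} (w : G.Walk x y) : f y ≤ f x + w.length * b := by
  induction w with
  | nil => simp
  | cons h _ ih =>
    rw [SimpleGraph.Walk.length_cons]
    have := hs h
    nlinarith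

theorem bandwidth_le_of_stretchLE [Fintype V] {G : SimpleGraph V} {b : ℕ}
    (e : V ≃ Fin (Fintype.card V)) (hs : StretchLE G (fun v => e v) b) : bandwidth G ≤ b :=
  Nat.sInf_le ⟨e, fun u v h => by
    have huv : (e v : ℕ) ≤ e u + b := hs h
    have hvu : (e u : ℕ) ≤ e v + b := hs h.symm
    exact abs_le.2 ⟨by omega, by omega⟩⟩

theorem exists_equiv_fin_lt_of_isStrictOrder [Fintype V] (r : V → V → Prop)
    [IsStrictOrder V r] : ∃ e : V ≃ Fin (Fintype.card V), ∀ a b, r a b → e a < e b := by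
  let _ := partialOrderOfSO r
  let _ : Fintype (LinearExtension V) := ‹Fintype V›
  let e := (monoEquivOfFin (LinearExtension V) rfl).symm
  refine ⟨e.toEquiv, fun a b hab => e.strictMono ?_⟩
  have hne : a ≠ b := by rintro rfl; exact irrefl_of r a hab
  exact lt_of_le_of_ne (toLinearExtension.monotone (Or.inr hab)) hne

theorem IsCoComparabilityGraph.exists_equiv_fin_adj_or_adj_of_lt_of_lt [Fintype V]
    {G : SimpleGraph V} (hG : IsCoComparabilityGraph G) :
    ∃ e : V ≃ Fin (Fintype.card V), ∀ ⦃u v w⦄, G.Adj u v → e u < e w → e w < e v →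
      G.Adj u w ∨ G.Adj w v := by
  obtain ⟨r, htrans, hirr, hiff⟩ := hG
  have : IsStrictOrder V r := { irrefl := hirr, trans := htrans }
  obtain ⟨e, he⟩ := exists_equiv_fin_lt_of_isStrictOrder r
  refine ⟨e, fun u v w huv huw hwv => ?_⟩
  by_contra! ⟨hnuw, hnwv⟩
  have hruw : r u w := ((hiff u w (by rintro rfl; exact lt_irrefl _ huw)).1 hnuw).resolve_right
    fun h => (he _ _ h).not_gt huw
  have hrwv : r w v := ((hiff w v (by rintro rfl; exact lt_irrefl _ hwv)).1 hnwv).resolve_right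
    fun h => (he _ _ h).not_gt hwv
  exact (hiff u v huv.ne).2 (Or.inl (htrans _ _ _ hruw hrwv)) huv

theorem SimpleGraph.le_add_two_mul_maxDegree_sub_one [Fintype V] {G : SimpleGraph V}
    [DecidableRel G.Adj] {n : ℕ} (e : V ≃ Fin n) {u v : V} (huv : G.Adj u v)
    (hbetween : ∀ w, e u < e w → e w < e v → G.Adj u w ∨ G.Adj w v) :
    (e v : ℕ) ≤ e u + (2 * G.maxDegree - 1) := by
  classical
  have hsub : (Finset.Ioo (e u) (e v)).map e.symm.toEmbedding ⊆
      (G.neighborFinset u).erase v ∪ (G.neighborFinset v).erase u := by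
    intro w hw
    obtain ⟨i, hi, rfl⟩ := Finset.mem_map.1 hw
    obtain ⟨hui, hiv⟩ := Finset.mem_Ioo.1 hi
    rcases hbetween (e.symm i) (by simpa using hui) (by simpa using hiv) with h | h
    · exact Finset.mem_union_left _ <| Finset.mem_erase.2
        ⟨by rintro rfl; simp at hiv, by simpa using h⟩
    · exact Finset.mem_union_right _ <| Finset.mem_erase.2
        ⟨by rintro rfl; simp at hui, by simpa using h.symm⟩
  have hcard := (Finset.card_le_card hsub).trans (Finset.card_union_le _ _)
  rw [Finset.card_map, Fin.card_Ioo, Finset.card_erase_of_mem (by simpa using huv),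
    Finset.card_erase_of_mem (by simpa using huv.symm), G.card_neighborFinset_eq_degree,
    G.card_neighborFinset_eq_degree] at hcard
  have hu := G.degree_le_maxDegree u
  have hv := G.degree_le_maxDegree v
  have hu0 : 0 < G.degree u := G.degree_pos_iff_exists_adj u |>.2 ⟨v, huv⟩
  omega

theorem IsCoComparabilityGraph.exists_equiv_fin_stretchLE [Fintype V] {G : SimpleGraph V}
    [DecidableRel G.Adj] (hG : IsCoComparabilityGraph G) :
    ∃ e : V ≃ Fin (Fintype.card V), StretchLE G (fun v => e v) (2 * G.maxDegree - 1) := by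
  obtain ⟨e, he⟩ := hG.exists_equiv_fin_adj_or_adj_of_lt_of_lt
  exact ⟨e, fun u v h => G.le_add_two_mul_maxDegree_sub_one e h fun w => he h⟩

open Classical in
/-- Halving towards `1` keeps the value in `[0, 1)` however long the chain `p, p - b, p - 2b, …`
is. -/
noncomputable def chainTiebreak (R : ℕ → ℕ → Prop) (b p : ℕ) : ℝ :=
  if h : 0 < b ∧ b ≤ p then
    if R (p - b) p then chainTiebreak R b (p - b) else (chainTiebreak R b (p - b) + 1) / 2
  else 0
termination_by p
decreasing_by all_goals omega

section chainTiebreak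

variable {R : ℕ → ℕ → Prop} {b : ℕ}

theorem chainTiebreak_mem_Ico (p : ℕ) : chainTiebreak R b p ∈ Set.Ico 0 1 := by
  induction p using Nat.strong_induction_on with
  | _ p ih =>
    rw [chainTiebreak]
    split_ifs with h
    · exact ih _ (by omega)
    · obtain ⟨h0, h1⟩ := ih (p - b) (by omega)
      constructor <;> linarith
    · simp

theorem chainTiebreak_add_of_rel (hb : 0 < b) {p : ℕ} (h : R p (p + b)) :
    chainTiebreak R b (p + b) = chainTiebreak R b p := by
  rw [chainTiebreak]
  simp [hb, h]

theorem chainTiebreak_lt_add_of_not_rel (hb : 0 < b) {p : ℕ} (h : ¬ R p (p + b)) :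
    chainTiebreak R b p < chainTiebreak R b (p + b) := by
  rw [chainTiebreak.eq_1 R b (p + b)]
  simp only [hb, le_add_iff_nonneg_left, zero_le, and_self, dite_true, Nat.add_sub_cancel, h,
    if_false]
  linarith [(chainTiebreak_mem_Ico (R := R) (b := b) p).2]

end chainTiebreak

noncomputable def slopeCoord (G : SimpleGraph V) (f : V → ℕ) (b : ℕ) (x : V) : ℝ :=
  (f x + chainTiebreak (Relation.Map G.Adj f f) b (f x)) / b

section slopeCoord

variable {G : SimpleGraph V} {f : V → ℕ} {b : ℕ} {u v : V}

theorem slopeCoord_sub_le_one (hb : 0 < b) (hs : StretchLE G f b) (h : G.Adj u v) :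
    slopeCoord G f b v - slopeCoord G f b u ≤ 1 := by
  rw [slopeCoord, slopeCoord, ← sub_div, div_le_one (by positivity)]
  obtain ⟨hu, -⟩ := chainTiebreak_mem_Ico (R := Relation.Map G.Adj f f) (b := b) (f u)
  obtain ⟨-, hv⟩ := chainTiebreak_mem_Ico (R := Relation.Map G.Adj f f) (b := b) (f v)
  rcases (hs h).eq_or_lt with heq | hlt
  · rw [heq, chainTiebreak_add_of_rel hb ⟨u, v, h, rfl, heq⟩, Nat.cast_add]
    linarith
  · have : (f v : ℝ) + 1 ≤ f u + b := by exact_mod_cast hlt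
    linarith

theorem one_lt_slopeCoord_sub (hb : 0 < b) (hf : Function.Injective f) (h : ¬ G.Adj u v)
    (huv : f u + b ≤ f v) : 1 < slopeCoord G f b v - slopeCoord G f b u := by
  rw [slopeCoord, slopeCoord, ← sub_div, one_lt_div (by positivity)]
  obtain ⟨-, hu⟩ := chainTiebreak_mem_Ico (R := Relation.Map G.Adj f f) (b := b) (f u)
  obtain ⟨hv, -⟩ := chainTiebreak_mem_Ico (R := Relation.Map G.Adj f f) (b := b) (f v)
  rcases huv.eq_or_lt with heq | hlt
  · have hnrel : ¬ Relation.Map G.Adj f f (f u) (f u + b) := by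
      rwa [heq, Relation.map_apply_apply hf hf]
    have := chainTiebreak_lt_add_of_not_rel hb hnrel
    rw [← heq, Nat.cast_add]
    linarith
  · have : (f u : ℝ) + b + 1 ≤ f v := by exact_mod_cast hlt
    linarith

end slopeCoord

/-- `centerPotential G f b C x = min (f x / (b+1)) (min_{q ∈ C} f q / (b+1) + d(q, x) - 2)`,
with the graph distance `d` unfolded into an infimum over walks. -/
def centerPotentialCandidates (G : SimpleGraph V) (f : V → ℕ) (b : ℕ) (C : Set V) (x : V) :
    Set ℝ :=
  insert ((f x : ℝ) / (b + 1))
    {z : ℝ | ∃ q ∈ C, ∃ w : G.Walk q x, z = f q / (b + 1) + w.length - 2}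

noncomputable def centerPotential (G : SimpleGraph V) (f : V → ℕ) (b : ℕ) (C : Set V) (x : V) :
    ℝ :=
  sInf (centerPotentialCandidates G f b C x)

section centerPotential

variable {G : SimpleGraph V} {f : V → ℕ} {b : ℕ} {C : Set V} {u v q x y : V}

theorem bddBelow_centerPotentialCandidates (x : V) :
    BddBelow (centerPotentialCandidates G f b C x) := by
  refine ⟨-2, ?_⟩
  rintro z (rfl | ⟨q, -, w, rfl⟩)
  · have : (0 : ℝ) ≤ f x / (b + 1) := by positivity
    linarith
  · have : (0 : ℝ) ≤ f q / (b + 1) := by positivity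
    have : (0 : ℝ) ≤ w.length := by positivity
    linarith

theorem centerPotential_le_self (x : V) : centerPotential G f b C x ≤ f x / (b + 1) :=
  csInf_le (bddBelow_centerPotentialCandidates x) (Set.mem_insert _ _)

theorem centerPotential_le_of_mem (hu : u ∈ C) : centerPotential G f b C u ≤ f u / (b + 1) - 2 :=
  csInf_le (bddBelow_centerPotentialCandidates u)
    (Set.mem_insert_of_mem _ ⟨u, hu, SimpleGraph.Walk.nil, by simp⟩)

theorem centerPotential_le_add_one_of_adj (hs : StretchLE G f b) (h : G.Adj x y) :
    centerPotential G f b C y ≤ centerPotential G f b C x + 1 := by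
  rw [← sub_le_iff_le_add]
  refine le_csInf (Set.insert_nonempty _ _) ?_
  rintro z (rfl | ⟨q, hq, w, rfl⟩)
  · have hxy : (f y : ℝ) ≤ f x + b := by exact_mod_cast hs h
    have : (f y : ℝ) / (b + 1) ≤ f x / (b + 1) + 1 := by
      rw [div_add_one (by positivity)]
      gcongr
      linarith
    linarith [centerPotential_le_self (G := G) (f := f) (b := b) (C := C) y]
  · have := csInf_le (bddBelow_centerPotentialCandidates (G := G) (f := f) (b := b) (C := C) y)
      (Set.mem_insert_of_mem _ ⟨q, hq, w.concat h, rfl⟩)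
    rw [SimpleGraph.Walk.length_concat, Nat.cast_succ] at this
    rw [centerPotential]
    linarith

theorem abs_centerPotential_sub_le_one (hs : StretchLE G f b) (h : G.Adj x y) :
    |centerPotential G f b C x - centerPotential G f b C y| ≤ 1 :=
  abs_sub_le_iff.2 ⟨by linarith [centerPotential_le_add_one_of_adj (C := C) hs h.symm],
    by linarith [centerPotential_le_add_one_of_adj (C := C) hs h]⟩

theorem add_add_two_le_of_walk_of_modEq (hf : Function.Injective f)
    (hs : StretchLE G f b) (h : ¬ G.Adj u v) (huv : f u < f v) (hvu : f v < f u + b)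
    (hq : f q ≡ f u [MOD b]) (w : G.Walk q v) : f u + b + 2 ≤ f q + (b + 1) * w.length := by
  obtain ⟨m, hm⟩ := Nat.modEq_iff_dvd.1 hq.symm
  have hwalk := hs.le_add_length_mul w
  have hlen0 : w.length ≠ 0 := by
    intro h0
    obtain rfl := w.eq_of_length_eq_zero h0
    have h1 : (0 : ℤ) < b * m := by omega
    have h2 : (b : ℤ) * m < b := by omega
    have hm1 : 1 ≤ m := by
      by_contra!
      nlinarith
    nlinarith
  have hlen1 : w.length = 1 → m ≠ 0 := by
    rintro h1 rfl
    obtain rfl : q = u := hf (by omega)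
    exact h (w.adj_of_length_eq_one h1)
  zify at hwalk huv ⊢
  have hpos : (0 : ℤ) < b * (m + w.length) := by nlinarith
  have hsum : 1 ≤ m + w.length := by
    by_contra!
    nlinarith
  rcases hsum.eq_or_lt with hsum | hsum
  · have : (2 : ℤ) ≤ w.length := by omega
    nlinarith
  · nlinarith

theorem sub_div_le_centerPotential (hf : Function.Injective f)
    (hs : StretchLE G f b) (h : ¬ G.Adj u v) (huv : f u < f v) (hvu : f v < f u + b) :
    ((f u : ℝ) - b) / (b + 1) ≤ centerPotential G f b {q | f q ≡ f u [MOD b]} v := by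
  refine le_csInf (Set.insert_nonempty _ _) ?_
  rintro z (rfl | ⟨q, hq, w, rfl⟩)
  · gcongr
    have : (f u : ℝ) ≤ f v := by exact_mod_cast huv.le
    linarith
  · have key : (f u : ℝ) + b + 2 ≤ f q + (b + 1) * w.length := by
      exact_mod_cast add_add_two_le_of_walk_of_modEq hf hs h huv hvu hq w
    rw [show (f q : ℝ) / (b + 1) + w.length - 2 = (f q + (b + 1) * w.length - 2 * (b + 1)) / (b + 1)
      by field_simp]
    exact div_le_div_of_nonneg_right (by linarith) (by positivity)

theorem one_lt_centerPotential_sub (hf : Function.Injective f)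
    (hs : StretchLE G f b) (h : ¬ G.Adj u v) (huv : f u < f v) (hvu : f v < f u + b) :
    1 < centerPotential G f b {q | f q ≡ f u [MOD b]} v -
      centerPotential G f b {q | f q ≡ f u [MOD b]} u := by
  have hv := sub_div_le_centerPotential hf hs h huv hvu
  have hu := centerPotential_le_of_mem (G := G) (f := f) (b := b)
    (show u ∈ {q | f q ≡ f u [MOD b]} from Nat.ModEq.refl _)
  have : ((f u : ℝ) - b) / (b + 1) - (f u / (b + 1) - 2) = 1 + 1 / (b + 1) := by
    field_simp; ring
  have : (0 : ℝ) < 1 / (b + 1) := by positivity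
  linarith

end centerPotential

noncomputable def cubeCoords (G : SimpleGraph V) (f : V → ℕ) (b : ℕ) (x : V) : Fin (b + 1) → ℝ :=
  Fin.cons (slopeCoord G f b x) fun j => centerPotential G f b {q | f q % b = j} x

section cubeCoords

variable {G : SimpleGraph V} {f : V → ℕ} {b : ℕ} {u v : V}

theorem abs_cubeCoords_sub_le_one (hb : 0 < b) (hs : StretchLE G f b) (h : G.Adj u v)
    (i : Fin (b + 1)) : |cubeCoords G f b u i - cubeCoords G f b v i| ≤ 1 := by
  induction i using Fin.cases with
  | zero => exact abs_sub_le_iff.2 ⟨slopeCoord_sub_le_one hb hs h.symm,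
      slopeCoord_sub_le_one hb hs h⟩
  | succ j => exact abs_centerPotential_sub_le_one hs h

theorem exists_one_lt_abs_cubeCoords_sub (hb : 0 < b) (hf : Function.Injective f)
    (hs : StretchLE G f b) (h : ¬ G.Adj u v) (huv : f u < f v) :
    ∃ i, 1 < |cubeCoords G f b u i - cubeCoords G f b v i| := by
  by_cases hfar : f u + b ≤ f v
  · refine ⟨0, ?_⟩
    rw [abs_sub_comm]
    exact (one_lt_slopeCoord_sub hb hf h hfar).trans_le (le_abs_self _)
  · refine ⟨Fin.succ ⟨f u % b, Nat.mod_lt _ hb⟩, ?_⟩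
    rw [abs_sub_comm]
    exact (one_lt_centerPotential_sub hf hs h huv (by omega)).trans_le (le_abs_self _)

theorem hasCubeRep_succ_of_stretchLE (hb : 0 < b) (hf : Function.Injective f)
    (hs : StretchLE G f b) : HasCubeRep G (b + 1) := by
  refine ⟨cubeCoords G f b, fun u v huv => ⟨fun h => abs_cubeCoords_sub_le_one hb hs h, ?_⟩⟩
  intro hall
  by_contra h
  rcases (hf.ne huv).lt_or_gt with hlt | hlt
  · obtain ⟨i, hi⟩ := exists_one_lt_abs_cubeCoords_sub hb hf hs h hlt
    exact (hall i).not_gt hi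
  · obtain ⟨i, hi⟩ := exists_one_lt_abs_cubeCoords_sub hb hf hs (fun h' => h h'.symm) hlt
    exact (hall i).not_gt (abs_sub_comm (cubeCoords G f b u i) _ ▸ hi)

end cubeCoords

end

/-- a co-comparability graph with maximum degree `Δ ≥ 1` has bandwidth
at most `2Δ - 1`, and consequently cubicity at most `2Δ`. -/
theorem coComparability_bandwidth_cubicity {V : Type*} [Fintype V] (G : SimpleGraph V)
    [DecidableRel G.Adj] (hΔ : 0 < G.maxDegree) (hG : IsCoComparabilityGraph G) :
    bandwidth G ≤ 2 * G.maxDegree - 1 ∧ cubicity G ≤ 2 * G.maxDegree := by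
  obtain ⟨e, hs⟩ := hG.exists_equiv_fin_stretchLE
  have hinj : Function.Injective fun v => (e v : ℕ) := Fin.val_injective.comp e.injective
  refine ⟨bandwidth_le_of_stretchLE e hs, Nat.sInf_le ?_⟩
  have hrep := hasCubeRep_succ_of_stretchLE (by omega) hinj hs
  rwa [Nat.sub_add_cancel (by omega)] at hrep
end

section
/- Let G be a connected graph with maximum degree Δ, and let T be a spanning caterpillar subgraph of G with spine p_1, ..., p_k such that any two vertices adjacent in G are at distance at most four in T, and any pair of G-adjacent vertices at T-distance exactly four are both leaves of T. Let L_i be the set of leaves of T attached to p_i. Then the linear ordering L_1, p_1, L_2, p_2, ..., L_k, p_k (with vertices within each L_i ordered arbitrarily) has width at most 3Δ − 2. -/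
/-- let `G` be a connected graph with maximum degree `Δ` and `T ≤ G` a
spanning caterpillar subgraph with spine `p 0, …, p (k-1)`: every vertex `v` is
assigned a spine index `ℓ v`, the edges of `T` are exactly the consecutive spine
edges together with the edges joining each non-spine vertex (leaf) `v` to `p (ℓ v)`;
any two `G`-adjacent vertices are at `T`-distance at most 4, and `G`-adjacent
vertices at `T`-distance exactly 4 are both leaves.  Let `f` be a linear ordering
of the vertices listing `L 0, p 0, L 1, p 1, …` (leaves of each spine vertex, in an
arbitrary order, directly before their spine vertex): i.e. `f` respects the spine
indices and puts each leaf before its spine vertex.  Then the width of `f` is at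
most `3Δ - 2`. -/
theorem caterpillar_ordering_width {V : Type*} [Fintype V] [DecidableEq V]
    (G T : SimpleGraph V) [DecidableRel G.Adj]
    (hconn : G.Connected) (hTG : T ≤ G)
    (k : ℕ) (hk : 0 < k) (p : Fin k → V) (hp : Function.Injective p)
    (ℓ : V → Fin k) (hℓp : ∀ i, ℓ (p i) = i)
    (hTadj : ∀ u v : V, T.Adj u v ↔
      ((∃ i : Fin k, ∃ hi : (i : ℕ) + 1 < k,
          (u = p i ∧ v = p ⟨(i : ℕ) + 1, hi⟩) ∨ (v = p i ∧ u = p ⟨(i : ℕ) + 1, hi⟩)) ∨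
        (u = p (ℓ v) ∧ ∀ i, v ≠ p i) ∨
        (v = p (ℓ u) ∧ ∀ i, u ≠ p i)))
    (hdist : ∀ u v : V, G.Adj u v → T.dist u v ≤ 4)
    (hdist4 : ∀ u v : V, G.Adj u v → T.dist u v = 4 →
      (∀ i, u ≠ p i) ∧ (∀ i, v ≠ p i))
    (f : V ≃ Fin (Fintype.card V))
    (hblocks : ∀ u v : V, ℓ u < ℓ v → f u < f v)
    (hleaf : ∀ v : V, (∀ i, v ≠ p i) → f v < f (p (ℓ v))) :
    ∀ u v : V, G.Adj u v →
      |((f u : ℕ) : ℤ) - ((f v : ℕ) : ℤ)| ≤ 3 * (G.maxDegree : ℤ) - 2 := by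
  classical
  -- step lemma
  have hstep : ∀ x y : V, T.Adj x y → (ℓ y : ℕ) ≤ (ℓ x : ℕ) + 1 ∧ (ℓ x : ℕ) ≤ (ℓ y : ℕ) + 1 := by
    intro x y hxy
    rcases (hTadj x y).1 hxy with ⟨i, hi, ⟨hx, hy⟩ | ⟨hy, hx⟩⟩ | ⟨hx, _⟩ | ⟨hy, _⟩
    · subst hx; subst hy; rw [hℓp, hℓp]; simp; omega
    · subst hx; subst hy; rw [hℓp, hℓp]; simp; omega
    · subst hx; rw [hℓp]; omega
    · subst hy; rw [hℓp]; omega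
  have hwalk : ∀ (x y : V) (W : T.Walk x y),
      (ℓ y : ℕ) ≤ (ℓ x : ℕ) + W.length ∧ (ℓ x : ℕ) ≤ (ℓ y : ℕ) + W.length := by
    intro x y W
    induction W with
    | nil => simp
    | cons h W ih =>
      have := hstep _ _ h
      simp only [SimpleGraph.Walk.length_cons]
      omega
  have hleafnbr : ∀ x y : V, (∀ i, x ≠ p i) → T.Adj x y → y = p (ℓ x) := by
    intro x y hx hxy
    rcases (hTadj x y).1 hxy with ⟨i, hi, ⟨hx', _⟩ | ⟨_, hx'⟩⟩ | ⟨hx', _⟩ | ⟨hy', _⟩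
    · exact absurd hx' (hx i)
    · exact absurd hx' (hx _)
    · exact absurd hx' (hx _)
    · exact hy'
  have hwalkleaf : ∀ (x y : V) (W : T.Walk x y), (∀ i, x ≠ p i) → x ≠ y →
      (ℓ y : ℕ) + 1 ≤ (ℓ x : ℕ) + W.length ∧ (ℓ x : ℕ) + 1 ≤ (ℓ y : ℕ) + W.length := by
    intro x y W hx hxy
    cases W with
    | nil => exact absurd rfl hxy
    | @cons _ b _ h W' =>
      have hw := hleafnbr _ _ hx h
      subst hw
      have h2 := hwalk _ _ W'
      rw [hℓp] at h2
      simp only [SimpleGraph.Walk.length_cons]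
      omega
  have hTadj_spine : ∀ (i : ℕ) (hi : i + 1 < k),
      T.Adj (p ⟨i, Nat.lt_of_succ_lt hi⟩) (p ⟨i + 1, hi⟩) := by
    intro i hi
    rw [hTadj]
    exact Or.inl ⟨⟨i, Nat.lt_of_succ_lt hi⟩, hi, Or.inl ⟨rfl, rfl⟩⟩
  have hreach_spine : ∀ (j : ℕ) (hj : j < k), T.Reachable (p ⟨0, hk⟩) (p ⟨j, hj⟩) := by
    intro j
    induction j with
    | zero => intro hj; exact SimpleGraph.Reachable.refl _
    | succ n ih =>
      intro hj
      exact (ih (Nat.lt_of_succ_lt hj)).trans (hTadj_spine n hj).reachable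
  have hreach_p : ∀ x : V, T.Reachable x (p (ℓ x)) := by
    intro x
    by_cases hx : ∀ i, x ≠ p i
    · have : T.Adj x (p (ℓ x)) := (hTadj _ _).2 (Or.inr (Or.inr ⟨rfl, hx⟩))
      exact this.reachable
    · push_neg at hx
      obtain ⟨i, hi⟩ := hx
      subst hi
      rw [hℓp]
  have hpre : ∀ x y : V, T.Reachable x y := by
    intro x y
    refine (hreach_p x).trans (.trans ?_ (hreach_p y).symm)
    have h1 := hreach_spine (ℓ x) (ℓ x).isLt
    have h2 := hreach_spine (ℓ y) (ℓ y).isLt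
    simp only [Fin.eta] at h1 h2
    exact h1.symm.trans h2
  have hdistlow : ∀ x y : V, (ℓ y : ℕ) ≤ (ℓ x : ℕ) + T.dist x y ∧
      (ℓ x : ℕ) ≤ (ℓ y : ℕ) + T.dist x y := by
    intro x y
    obtain ⟨W, hW⟩ := (hpre x y).exists_walk_length_eq_dist
    rw [← hW]
    exact hwalk _ _ W
  have hdistleaf : ∀ x y : V, (∀ i, x ≠ p i) → x ≠ y →
      (ℓ y : ℕ) + 1 ≤ (ℓ x : ℕ) + T.dist x y ∧
      (ℓ x : ℕ) + 1 ≤ (ℓ y : ℕ) + T.dist x y := by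
    intro x y hx hxy
    obtain ⟨W, hW⟩ := (hpre x y).exists_walk_length_eq_dist
    rw [← hW]
    exact hwalkleaf _ _ W hx hxy
  have hdistleaf2 : ∀ x y : V, (∀ i, x ≠ p i) → (∀ i, y ≠ p i) → x ≠ y →
      (ℓ y : ℕ) + 2 ≤ (ℓ x : ℕ) + T.dist x y ∧
      (ℓ x : ℕ) + 2 ≤ (ℓ y : ℕ) + T.dist x y := by
    intro x y hx hy hxy
    obtain ⟨W, hW⟩ := (hpre x y).exists_walk_length_eq_dist
    rw [← hW]
    cases W with
    | nil => exact absurd rfl hxy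
    | @cons _ b _ h W' =>
      have hw := hleafnbr _ _ hx h
      subst hw
      have h2 := hwalkleaf _ _ W'.reverse hy (hy _)
      rw [SimpleGraph.Walk.length_reverse, hℓp] at h2
      simp only [SimpleGraph.Walk.length_cons]
      omega
  -- spine vertex with matching label is p itself
  have hspine : ∀ (w : V) (i : Fin k), ℓ w = i → w ≠ p i → ∀ j, w ≠ p j := by
    intro w i hwi hwp j hj
    apply hwp
    rw [hj] at hwi ⊢
    rw [hℓp] at hwi
    rw [hwi]
  -- every vertex in block i is p i or a T-neighbor of p i
  have hBsub : ∀ i : Fin k,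
      (Finset.univ.filter fun w => ℓ w = i) ⊆ insert (p i) (T.neighborFinset (p i)) := by
    intro i w hw
    rw [Finset.mem_filter] at hw
    by_cases hwp : w = p i
    · simp [hwp]
    · have hwleaf := hspine w i hw.2 hwp
      have : T.Adj w (p i) := by
        rw [hTadj]
        exact Or.inr (Or.inr ⟨by rw [hw.2], hwleaf⟩)
      rw [Finset.mem_insert, SimpleGraph.mem_neighborFinset]
      exact Or.inr this.symm
  have hTdeg : ∀ x : V, T.degree x ≤ G.maxDegree := by
    intro x
    refine le_trans ?_ (G.degree_le_maxDegree x)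
    apply Finset.card_le_card
    intro w hw
    rw [SimpleGraph.mem_neighborFinset] at hw ⊢
    exact hTG hw
  -- general bound: block i together with any spine-neighbors set
  have hBcard : ∀ (i : Fin k) (s : Finset V), s ⊆ T.neighborFinset (p i) →
      (∀ x ∈ s, ℓ x ≠ i) →
      (Finset.univ.filter fun w => ℓ w = i).card + s.card ≤ G.maxDegree + 1 := by
    intro i s hs hsl
    have hdisj : Disjoint (Finset.univ.filter fun w => ℓ w = i) s := by
      rw [Finset.disjoint_left]
      intro x hx hxs
      rw [Finset.mem_filter] at hx
      exact hsl x hxs hx.2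
    have hsub : (Finset.univ.filter fun w => ℓ w = i) ∪ s ⊆ insert (p i) (T.neighborFinset (p i)) := by
      apply Finset.union_subset (hBsub i)
      exact hs.trans (Finset.subset_insert _ _)
    calc (Finset.univ.filter fun w => ℓ w = i).card + s.card
        = ((Finset.univ.filter fun w => ℓ w = i) ∪ s).card := (Finset.card_union_of_disjoint hdisj).symm
      _ ≤ (insert (p i) (T.neighborFinset (p i))).card := Finset.card_le_card hsub
      _ ≤ T.degree (p i) + 1 := by
          rw [SimpleGraph.degree]; exact Finset.card_insert_le _ _
      _ ≤ G.maxDegree + 1 := by have := hTdeg (p i); omega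
  have hBany : ∀ i : Fin k,
      (Finset.univ.filter fun w => ℓ w = i).card ≤ G.maxDegree + 1 := by
    intro i
    have := hBcard i ∅ (Finset.empty_subset _) (by simp)
    simpa using this
  -- right-neighbor bound
  have hBr : ∀ i : Fin k, (i : ℕ) + 1 < k →
      (Finset.univ.filter fun w => ℓ w = i).card + 1 ≤ G.maxDegree + 1 := by
    intro i hi
    have hadj : T.Adj (p i) (p ⟨(i : ℕ) + 1, hi⟩) := by
      have := hTadj_spine i hi
      simpa using this
    have := hBcard i {p ⟨(i : ℕ) + 1, hi⟩} (by
        simp only [Finset.singleton_subset_iff, SimpleGraph.mem_neighborFinset]; exact hadj)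
      (by
        intro x hx
        rw [Finset.mem_singleton] at hx
        subst hx
        rw [hℓp]
        intro hcon
        rw [Fin.ext_iff, Fin.val_mk] at hcon
        omega)
    simpa using this
  have hBl : ∀ i : Fin k, 0 < (i : ℕ) →
      (Finset.univ.filter fun w => ℓ w = i).card + 1 ≤ G.maxDegree + 1 := by
    intro i hi
    have hi' : ((i : ℕ) - 1) + 1 < k := by omega
    have hadj : T.Adj (p ⟨(i : ℕ) - 1, Nat.lt_of_succ_lt hi'⟩) (p i) := by
      have := hTadj_spine ((i : ℕ) - 1) hi'
      have he : (⟨(i : ℕ) - 1 + 1, hi'⟩ : Fin k) = i := by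
        rw [Fin.ext_iff]; simp; omega
      rwa [he] at this
    have := hBcard i {p ⟨(i : ℕ) - 1, Nat.lt_of_succ_lt hi'⟩} (by
        simp only [Finset.singleton_subset_iff, SimpleGraph.mem_neighborFinset]
        exact hadj.symm)
      (by
        intro x hx
        rw [Finset.mem_singleton] at hx
        subst hx
        rw [hℓp]
        intro hcon
        rw [Fin.ext_iff, Fin.val_mk] at hcon
        omega)
    simpa using this
  have hBlr : ∀ i : Fin k, 0 < (i : ℕ) → (i : ℕ) + 1 < k →
      (Finset.univ.filter fun w => ℓ w = i).card + 2 ≤ G.maxDegree + 1 := by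
    intro i hi0 hi1
    have hi' : ((i : ℕ) - 1) + 1 < k := by omega
    have hadjl : T.Adj (p ⟨(i : ℕ) - 1, Nat.lt_of_succ_lt hi'⟩) (p i) := by
      have := hTadj_spine ((i : ℕ) - 1) hi'
      have he : (⟨(i : ℕ) - 1 + 1, hi'⟩ : Fin k) = i := by
        rw [Fin.ext_iff]; simp; omega
      rwa [he] at this
    have hadjr : T.Adj (p i) (p ⟨(i : ℕ) + 1, hi1⟩) := by
      have := hTadj_spine i hi1
      simpa using this
    have hne : p ⟨(i : ℕ) - 1, Nat.lt_of_succ_lt hi'⟩ ≠ p ⟨(i : ℕ) + 1, hi1⟩ := by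
      intro hcon
      have := hp hcon
      rw [Fin.mk.injEq] at this
      omega
    have := hBcard i {p ⟨(i : ℕ) - 1, Nat.lt_of_succ_lt hi'⟩, p ⟨(i : ℕ) + 1, hi1⟩} (by
        intro x hx
        rw [Finset.mem_insert, Finset.mem_singleton] at hx
        rw [SimpleGraph.mem_neighborFinset]
        rcases hx with rfl | rfl
        · exact hadjl.symm
        · exact hadjr)
      (by
        intro x hx
        rw [Finset.mem_insert, Finset.mem_singleton] at hx
        rcases hx with rfl | rfl <;>
        · rw [hℓp]
          intro hcon
          rw [Fin.ext_iff, Fin.val_mk] at hcon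
          omega)
    rw [Finset.card_insert_of_notMem (by rwa [Finset.mem_singleton]),
      Finset.card_singleton] at this
    omega
  have hScard : ∀ u v : V, (Finset.univ.filter fun w => f u < f w ∧ f w ≤ f v).card
      = (f v : ℕ) - (f u : ℕ) := by
    intro u v
    have himg : (Finset.univ.filter fun w => f u < f w ∧ f w ≤ f v)
        = (Finset.Ioc (f u) (f v)).image f.symm := by
      ext w
      simp only [Finset.mem_filter, Finset.mem_univ, true_and, Finset.mem_image, Finset.mem_Ioc]
      constructor
      · rintro ⟨h1, h2⟩
        exact ⟨f w, ⟨h1, h2⟩, by simp⟩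
      · rintro ⟨x, hx, rfl⟩
        simpa using hx
    rw [himg, Finset.card_image_of_injective _ f.symm.injective, Fin.card_Ioc]
  have key : ∀ u v : V, G.Adj u v → f u < f v →
      (f v : ℕ) - (f u : ℕ) + 2 ≤ 3 * G.maxDegree := by
    intro u v huv hfuv
    have hΔ : 1 ≤ G.maxDegree := by
      have h1 : 0 < G.degree u := by
        rw [SimpleGraph.degree_pos_iff_exists_adj]; exact ⟨v, huv⟩
      exact le_trans h1 (G.degree_le_maxDegree u)
    have hba : (ℓ u : ℕ) ≤ (ℓ v : ℕ) := by
      by_contra h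
      push_neg at h
      have := hblocks v u (by rwa [Fin.lt_def])
      omega
    -- block distance at most 3
    have hd3 : (ℓ v : ℕ) ≤ (ℓ u : ℕ) + 3 := by
      by_contra h
      push_neg at h
      have h1 := (hdistlow u v).1
      have h2 := hdist u v huv
      have h4 : T.dist u v = 4 := by omega
      obtain ⟨hu, hv⟩ := hdist4 u v huv h4
      have := (hdistleaf u v hu huv.ne).1
      omega
    set S : Finset V := Finset.univ.filter (fun w => f u < f w ∧ f w ≤ f v) with hS
    set A : ℕ → Finset V := fun j => S.filter (fun w => (ℓ w : ℕ) = j) with hA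
    -- membership bound
    have hSmem : ∀ w : V, w ∈ S → (ℓ u : ℕ) ≤ (ℓ w : ℕ) ∧ (ℓ w : ℕ) ≤ (ℓ v : ℕ) := by
      intro w hw
      rw [hS, Finset.mem_filter] at hw
      constructor
      · by_contra h
        push_neg at h
        have := hblocks w u (by rwa [Fin.lt_def])
        have := hw.2.1
        omega
      · by_contra h
        push_neg at h
        have := hblocks v w (by rwa [Fin.lt_def])
        have := hw.2.2
        omega
    -- the four slices
    have hsub4 : S ⊆ A (ℓ u : ℕ) ∪ (A ((ℓ u : ℕ) + 1) ∪ (A ((ℓ u : ℕ) + 2) ∪ A ((ℓ u : ℕ) + 3))) := by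
      intro w hw
      have h1 := hSmem w hw
      simp only [hA, Finset.mem_union, Finset.mem_filter]
      have : (ℓ w : ℕ) = (ℓ u : ℕ) ∨ (ℓ w : ℕ) = (ℓ u : ℕ) + 1 ∨
          (ℓ w : ℕ) = (ℓ u : ℕ) + 2 ∨ (ℓ w : ℕ) = (ℓ u : ℕ) + 3 := by omega
      tauto
    have hsplit : S.card ≤ (A (ℓ u : ℕ)).card + ((A ((ℓ u : ℕ) + 1)).card +
        ((A ((ℓ u : ℕ) + 2)).card + (A ((ℓ u : ℕ) + 3)).card)) := by
      refine le_trans (Finset.card_le_card hsub4) ?_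
      refine le_trans (Finset.card_union_le _ _) ?_
      gcongr
      refine le_trans (Finset.card_union_le _ _) ?_
      gcongr
      exact Finset.card_union_le _ _
    -- slice into block
    have hSjB : ∀ (j : ℕ) (hj : j < k),
        A j ⊆ Finset.univ.filter fun w => ℓ w = (⟨j, hj⟩ : Fin k) := by
      intro j hj w hw
      simp only [hA, Finset.mem_filter] at hw
      rw [Finset.mem_filter]
      exact ⟨Finset.mem_univ _, Fin.ext hw.2⟩
    have hSjBcard : ∀ (j : ℕ) (hj : j < k),
        (A j).card ≤ (Finset.univ.filter fun w => ℓ w = (⟨j, hj⟩ : Fin k)).card :=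
      fun j hj => Finset.card_le_card (hSjB j hj)
    -- empty past the end
    have hSjemp : ∀ j : ℕ, (ℓ v : ℕ) < j → A j = ∅ := by
      intro j hj
      rw [Finset.eq_empty_iff_forall_notMem]
      intro w hw
      simp only [hA, Finset.mem_filter] at hw
      have := hSmem w hw.1
      omega
    -- first slice: one smaller than the block
    have hSa : (A (ℓ u : ℕ)).card + 1 ≤ (Finset.univ.filter fun w => ℓ w = ℓ u).card := by
      have hunotmem : u ∉ A (ℓ u : ℕ) := by
        simp only [hA, hS, Finset.mem_filter]
        rintro ⟨⟨-, h1, -⟩, -⟩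
        exact absurd h1 (lt_irrefl _)
      have hsub : insert u (A (ℓ u : ℕ)) ⊆ Finset.univ.filter fun w => ℓ w = ℓ u := by
        intro w hw
        rw [Finset.mem_insert] at hw
        rcases hw with rfl | hw
        · simp
        · simp only [hA, Finset.mem_filter] at hw
          rw [Finset.mem_filter]
          exact ⟨Finset.mem_univ _, Fin.ext hw.2⟩
      calc (A (ℓ u : ℕ)).card + 1 = (insert u (A (ℓ u : ℕ))).card := by
            rw [Finset.card_insert_of_notMem hunotmem]
        _ ≤ _ := Finset.card_le_card hsub
    -- first slice is empty if u is a spine vertex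
    have hSa0 : u = p (ℓ u) → A (ℓ u : ℕ) = ∅ := by
      intro hup
      rw [Finset.eq_empty_iff_forall_notMem]
      intro w hw
      simp only [hA, hS, Finset.mem_filter, Finset.mem_univ, true_and] at hw
      obtain ⟨⟨hw1, hw2⟩, hw3⟩ := hw
      have hℓw : ℓ w = ℓ u := Fin.ext hw3
      by_cases hwp : w = p (ℓ w)
      · rw [hℓw] at hwp
        rw [← hup] at hwp
        subst hwp
        exact absurd hw1 (lt_irrefl _)
      · have hwleaf := hspine w (ℓ w) rfl hwp
        have := hleaf w hwleaf
        rw [hℓw, ← hup] at this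
        omega
    -- the final count
    have hgoal : S.card + 2 ≤ 3 * G.maxDegree := by
      have hbv := (ℓ v).isLt
      have h0 : (ℓ v : ℕ) = (ℓ u : ℕ) ∨ (ℓ v : ℕ) = (ℓ u : ℕ) + 1 ∨
          (ℓ v : ℕ) = (ℓ u : ℕ) + 2 ∨ (ℓ v : ℕ) = (ℓ u : ℕ) + 3 := by omega
      rcases h0 with h0 | h0 | h0 | h0
      · -- same block
        have e1 := hSjemp ((ℓ u : ℕ) + 1) (by omega)
        have e2 := hSjemp ((ℓ u : ℕ) + 2) (by omega)
        have e3 := hSjemp ((ℓ u : ℕ) + 3) (by omega)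
        have b0 := hBany (ℓ u)
        rw [e1, e2, e3] at hsplit
        simp only [Finset.card_empty] at hsplit
        omega
      · -- adjacent blocks
        have e2 := hSjemp ((ℓ u : ℕ) + 2) (by omega)
        have e3 := hSjemp ((ℓ u : ℕ) + 3) (by omega)
        have b0 := hBr (ℓ u) (by omega)
        have c1 := hSjBcard ((ℓ u : ℕ) + 1) (by omega)
        have b1 := hBl ⟨(ℓ u : ℕ) + 1, by omega⟩ (by simp)
        rw [e2, e3] at hsplit
        simp only [Finset.card_empty] at hsplit
        omega
      · -- distance two
        have e3 := hSjemp ((ℓ u : ℕ) + 3) (by omega)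
        have b0 := hBr (ℓ u) (by omega)
        have c1 := hSjBcard ((ℓ u : ℕ) + 1) (by omega)
        have b1 := hBlr ⟨(ℓ u : ℕ) + 1, by omega⟩ (by simp) (by simp only [Fin.val_mk]; omega)
        have c2 := hSjBcard ((ℓ u : ℕ) + 2) (by omega)
        have b2 := hBl ⟨(ℓ u : ℕ) + 2, by omega⟩ (by simp)
        rw [e3] at hsplit
        simp only [Finset.card_empty] at hsplit
        omega
      · -- distance three: u must be a spine vertex
        have hup : u = p (ℓ u) := by
          by_contra hup
          have hu := hspine u (ℓ u) rfl hup
          have h1 := (hdistleaf u v hu huv.ne).1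
          have h2 := hdist u v huv
          have h4 : T.dist u v = 4 := by omega
          obtain ⟨hu', hv'⟩ := hdist4 u v huv h4
          have := (hdistleaf2 u v hu' hv' huv.ne).1
          omega
        have e0 := hSa0 hup
        have c1 := hSjBcard ((ℓ u : ℕ) + 1) (by omega)
        have b1 := hBlr ⟨(ℓ u : ℕ) + 1, by omega⟩ (by simp) (by simp only [Fin.val_mk]; omega)
        have c2 := hSjBcard ((ℓ u : ℕ) + 2) (by omega)
        have b2 := hBlr ⟨(ℓ u : ℕ) + 2, by omega⟩ (by simp) (by simp only [Fin.val_mk]; omega)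
        have c3 := hSjBcard ((ℓ u : ℕ) + 3) (by omega)
        have b3 := hBl ⟨(ℓ u : ℕ) + 3, by omega⟩ (by simp)
        rw [e0] at hsplit
        simp only [Finset.card_empty] at hsplit
        omega
    have := hScard u v
    rw [← hS] at this
    have hlt : (f u : ℕ) < (f v : ℕ) := hfuv
    omega
  -- conclude
  intro u v huv
  rcases lt_trichotomy (f u) (f v) with h | h | h
  · have hkey := key u v huv h
    have hlt : (f u : ℕ) < (f v : ℕ) := h
    rw [abs_sub_comm, abs_of_nonneg (by
      simp only [sub_nonneg, Nat.cast_le]; exact hlt.le)]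
    omega
  · exact absurd (f.injective h) huv.ne
  · have hkey := key v u huv.symm h
    have hlt : (f v : ℕ) < (f u : ℕ) := h
    rw [abs_of_nonneg (by
      simp only [sub_nonneg, Nat.cast_le]; exact hlt.le)]
    omega
end

section
/- Let G be a graph that is the intersection graph of arcs on a circle, with all 2n arc endpoints distinct and no arc covering the whole circle. Order the vertices v_1, ..., v_n by the clockwise order of the heads (clockwise starting points) of their arcs, starting from the head of an arbitrary arc. Then for every edge (v_j, v_k) of G, the number of arc heads strictly between h(v_j) and h(v_k) in clockwise order (from the earlier head) is at most Δ − 1, where Δ is the maximum degree of G. -/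
open scoped Classical

/-- let `G` be the intersection graph of arcs on the unit circle, the
arc of `v` starting (clockwise) at `h v (mod 1)` and having length `len v ∈ (0,1)`,
with all `2n` endpoints distinct; two distinct vertices are adjacent iff their arcs
intersect, i.e. iff the head of one lies on the arc of the other.  Then for every
edge `(u, v)` such that the head of `v` lies on the arc of `u` (the head of `u`
"occurring first"), the number of arc heads lying strictly between `h u` and `h v`
in clockwise order from `h u` is at most `Δ - 1`. -/
theorem circularArc_heads_between {V : Type*} [Fintype V] (G : SimpleGraph V)
    [DecidableRel G.Adj] (h len : V → ℝ)
    (hlen : ∀ v, 0 < len v ∧ len v < 1)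
    (hheads : ∀ u v : V, u ≠ v → Int.fract (h u - h v) ≠ 0)
    (htails : ∀ u v : V, u ≠ v → Int.fract ((h u + len u) - (h v + len v)) ≠ 0)
    (hht : ∀ u v : V, Int.fract (h u - (h v + len v)) ≠ 0)
    (hadj : ∀ u v : V, u ≠ v →
      (G.Adj u v ↔ (Int.fract (h v - h u) ≤ len u ∨ Int.fract (h u - h v) ≤ len v))) :
    ∀ u v : V, G.Adj u v → Int.fract (h v - h u) ≤ len u →
      (Finset.univ.filter (fun w : V =>
        0 < Int.fract (h w - h u) ∧ Int.fract (h w - h u) < Int.fract (h v - h u))).card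
        ≤ G.maxDegree - 1 := by
  intro u v huv hle
  have hsub : (Finset.univ.filter (fun w : V =>
      0 < Int.fract (h w - h u) ∧ Int.fract (h w - h u) < Int.fract (h v - h u)))
      ⊆ G.neighborFinset u \ {v} := by
    intro w hw
    simp only [Finset.mem_filter, Finset.mem_univ, true_and] at hw
    obtain ⟨h1, h2⟩ := hw
    have hwu : w ≠ u := by
      intro e; subst e; simp at h1
    have hwv : w ≠ v := by
      intro e; subst e; exact lt_irrefl _ h2
    rw [Finset.mem_sdiff, SimpleGraph.mem_neighborFinset]
    exact ⟨(hadj u w hwu.symm).mpr (Or.inl (le_of_lt (lt_of_lt_of_le h2 hle))),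
      by simpa using hwv⟩
  have hv : v ∈ G.neighborFinset u := by
    simpa [SimpleGraph.mem_neighborFinset] using huv
  have hcard : (G.neighborFinset u \ {v}).card = G.degree u - 1 := by
    rw [Finset.card_sdiff_of_subset (by simpa using hv)]
    simp [SimpleGraph.card_neighborFinset_eq_degree]
  calc (Finset.univ.filter (fun w : V =>
        0 < Int.fract (h w - h u) ∧ Int.fract (h w - h u) < Int.fract (h v - h u))).card
      ≤ G.degree u - 1 := hcard ▸ Finset.card_le_card hsub
    _ ≤ G.maxDegree - 1 := Nat.sub_le_sub_right (G.degree_le_maxDegree u) 1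
end
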